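/- Let n be a positive integer, let B be a real symmetric 2n×2n matrix, and let W be a linear subspace of ℝ^{2n} such that J·W ⊆ W and B·W ⊆ W, and such that the restriction of B to W is injective (hence an isomorphism of W). If the Morse index of B restricted to W is odd, then J·B is spectrally unstable, i.e., J·B has a complex eigenvalue with nonzero real part. -/

import Mathlib

open Matrix

noncomputable section

/-- The standard symplectic matrix `J = [[0, -Iₙ], [Iₙ, 0]]`. -/
def Jmat (n : ℕ) : Matrix (Fin n ⊕ Fin n) (Fin n ⊕ Fin n) ℝ :=
  Matrix.fromBlocks 0 (-1) 1 0

/-- A real matrix regarded as a complex matrix. -/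
def mapC {m : Type*} [Fintype m] [DecidableEq m] (M : Matrix m m ℝ) : Matrix m m ℂ :=
  M.map (algebraMap ℝ ℂ)

/-- `M` is spectrally stable if every complex eigenvalue of `M` is purely imaginary. -/
def spectrallyStable {m : Type*} [Fintype m] [DecidableEq m] (M : Matrix m m ℝ) : Prop :=
  ∀ z ∈ spectrum ℂ (mapC M), z.re = 0

/-- `M` is semisimple if it is diagonalizable over `ℂ`. -/
def semisimpleC {m : Type*} [Fintype m] [DecidableEq m] (M : Matrix m m ℝ) : Prop :=
  ∃ P : Matrix m m ℂ, IsUnit P ∧ ∃ d : m → ℂ, mapC M = P * Matrix.diagonal d * P⁻¹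

/-- The Morse index of a real symmetric matrix: the number of negative eigenvalues,
counted with multiplicity (as roots of the characteristic polynomial). -/
def morseIndex {m : Type*} [Fintype m] [DecidableEq m] (B : Matrix m m ℝ) : ℕ :=
  ((B.charpoly.roots).filter (fun x => x < 0)).card

/-- The nullity of a real matrix: the dimension of its kernel. -/
def nullity {m : Type*} [Fintype m] [DecidableEq m] (B : Matrix m m ℝ) : ℕ :=
  Module.finrank ℝ (LinearMap.ker B.mulVecLin)

/-- The Morse index of the symmetric matrix `B` restricted to a `B`-invariant subspace `W`:
the maximal dimension of a linear subspace `U ⊆ W` on which the quadratic form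
`x ↦ xᵀ B x` is negative definite. -/
def morseIndexOn {m : Type*} [Fintype m] [DecidableEq m]
    (B : Matrix m m ℝ) (W : Submodule ℝ (m → ℝ)) : ℕ :=
  sSup {k : ℕ | ∃ U : Submodule ℝ (m → ℝ), U ≤ W ∧ Module.finrank ℝ U = k ∧
    ∀ x ∈ U, x ≠ 0 → x ⬝ᵥ B.mulVec x < 0}

/-!
On `W`, `J` restricts to a complex structure `g` (`g * g = -1`), so `dim W` is even and
`det g > 0`: a real eigenvalue of `g` would square to `-1`. Diagonalising the symmetric
restriction `T` of `B` in an orthonormal eigenbasis identifies the Morse index with the number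
of negative eigenvalues of `T`; as `T` is injective, an odd Morse index forces `det T < 0`.
Hence `det (g * T) < 0` on the even-dimensional space `W`, so the characteristic polynomial of
`g * T` is negative at `0` and, being monic, has a positive root: `J * B` has a positive real
eigenvalue.
-/

open Module Finset Polynomial

theorem Polynomial.Monic.exists_pos_isRoot_of_eval_zero_neg {p : ℝ[X]} (hp : p.Monic)
    (h0 : p.eval 0 < 0) : ∃ l > 0, p.IsRoot l := by
  have hdeg : 0 < p.degree := by
    by_contra! h
    rw [hp.degree_le_zero_iff_eq_one.1 h, eval_one] at h0
    exact one_pos.not_gt h0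
  have htop := p.tendsto_atTop_of_leadingCoeff_nonneg hdeg (by simp [hp.leadingCoeff])
  obtain ⟨c, hc_pos, hc⟩ :=
    ((Filter.eventually_gt_atTop 0).and (htop.eventually_gt_atTop 0)).exists
  obtain ⟨l, ⟨hl0, -⟩, hl⟩ := intermediate_value_Icc hc_pos.le p.continuous.continuousOn
    ⟨h0.le, hc.le⟩
  exact ⟨l, hl0.lt_of_ne (by rintro rfl; exact h0.ne hl), hl⟩

theorem LinearMap.exists_hasEigenvalue_pos_of_det_neg {V : Type*} [AddCommGroup V] [Module ℝ V]
    [FiniteDimensional ℝ V] {f : V →ₗ[ℝ] V} (heven : Even (finrank ℝ V))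
    (hdet : LinearMap.det f < 0) : ∃ l > 0, Module.End.HasEigenvalue f l := by
  have hcoeff : f.charpoly.eval 0 = LinearMap.det f := by
    rw [LinearMap.det_eq_sign_charpoly_coeff, heven.neg_one_pow, one_mul, coeff_zero_eq_eval_zero]
  obtain ⟨l, hl, hroot⟩ := f.charpoly_monic.exists_pos_isRoot_of_eval_zero_neg (hcoeff ▸ hdet)
  exact ⟨l, hl, (Module.End.hasEigenvalue_iff_isRoot_charpoly f l).2 hroot⟩

theorem Finset.prod_neg_of_odd_card_filter_neg {ι : Type*} (s : Finset ι) (f : ι → ℝ)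
    (hf : ∀ i ∈ s, f i ≠ 0) (hodd : Odd #{i ∈ s | f i < 0}) : ∏ i ∈ s, f i < 0 := by
  rw [← prod_filter_mul_prod_filter_not s (fun i => f i < 0)]
  have hneg : ∏ i ∈ s with f i < 0, f i < 0 := by
    have : ∏ i ∈ s with f i < 0, f i =
        (-1) ^ #{i ∈ s | f i < 0} * ∏ i ∈ s with f i < 0, -f i := by
      rw [prod_neg, ← mul_assoc, ← pow_add, Even.neg_one_pow ⟨_, rfl⟩, one_mul]
    rw [this, hodd.neg_one_pow, neg_one_mul, neg_neg_iff_pos]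
    exact prod_pos fun i hi => neg_pos.2 (mem_filter.1 hi).2
  refine mul_neg_of_neg_of_pos hneg (prod_pos fun i hi => ?_)
  obtain ⟨his, hi⟩ := mem_filter.1 hi
  exact (not_lt.1 hi).lt_of_ne (hf i his).symm

section ComplexStructure

variable {V : Type*} [AddCommGroup V] [Module ℝ V] [FiniteDimensional ℝ V] {g : V →ₗ[ℝ] V}

theorem LinearMap.det_sq_of_mul_self_eq_neg_one (hg : g * g = -1) :
    LinearMap.det g ^ 2 = (-1) ^ finrank ℝ V := by
  rw [sq, ← map_mul, hg, ← neg_one_smul ℝ 1, LinearMap.det_smul, map_one, mul_one]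

theorem LinearMap.even_finrank_of_mul_self_eq_neg_one (hg : g * g = -1) : Even (finrank ℝ V) := by
  by_contra hodd
  have := LinearMap.det_sq_of_mul_self_eq_neg_one hg
  rw [(Nat.not_even_iff_odd.1 hodd).neg_one_pow] at this
  nlinarith [sq_nonneg (LinearMap.det g)]

theorem LinearMap.det_pos_of_mul_self_eq_neg_one (hg : g * g = -1) : 0 < LinearMap.det g := by
  have heven := LinearMap.even_finrank_of_mul_self_eq_neg_one hg
  have hsq := LinearMap.det_sq_of_mul_self_eq_neg_one hg
  rw [heven.neg_one_pow] at hsq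
  refine (not_le.1 fun hle => ?_)
  obtain hneg | hzero := hle.lt_or_eq
  · -- a real eigenvalue `l` of `g` would satisfy `l ^ 2 = -1`
    obtain ⟨l, -, hl⟩ := LinearMap.exists_hasEigenvalue_pos_of_det_neg heven hneg
    obtain ⟨x, hx⟩ := hl.exists_hasEigenvector
    have hgg : g (g x) = -x := by simpa using congr($hg x)
    rw [hx.apply_eq_smul, map_smul, hx.apply_eq_smul, smul_smul] at hgg
    have hzero : (l * l + 1) • x = 0 := by rw [add_smul, one_smul, hgg, neg_add_cancel]
    rcases smul_eq_zero.1 hzero with h | h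
    · nlinarith
    · exact hx.2 h
  · norm_num [hzero] at hsq

end ComplexStructure

open scoped InnerProductSpace

namespace LinearMap.IsSymmetric

variable {V : Type*} [NormedAddCommGroup V] [InnerProductSpace ℝ V] {T : V →ₗ[ℝ] V}

section Eigenbasis

variable {ι : Type*} [Fintype ι] {e : OrthonormalBasis ι ℝ V} {μ : ι → ℝ}

theorem inner_self_apply_eq_sum (hT : T.IsSymmetric) (he : ∀ i, T (e i) = μ i • e i) (x : V) :
    ⟪x, T x⟫_ℝ = ∑ i, μ i * e.repr x i ^ 2 := by
  rw [← e.repr.inner_map_map, PiLp.inner_apply]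
  refine sum_congr rfl fun i _ => ?_
  rw [e.repr_apply_apply, e.repr_apply_apply, ← hT, he, real_inner_smul_left]
  simp only [RCLike.inner_apply, conj_trivial]
  ring

theorem finrank_le_card_neg (hT : T.IsSymmetric) (he : ∀ i, T (e i) = μ i • e i)
    {U : Submodule ℝ V} (hU : ∀ x ∈ U, x ≠ 0 → ⟪x, T x⟫_ℝ < 0) :
    finrank ℝ U ≤ #{i | μ i < 0} := by
  set S : Finset ι := {i | μ i < 0}
  -- the coordinates along eigenvectors of negative eigenvalue determine a vector of `U`
  let P : U →ₗ[ℝ] (S → ℝ) := LinearMap.pi fun i =>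
    (EuclideanSpace.proj (i : ι) : EuclideanSpace ℝ ι →L[ℝ] ℝ).toLinearMap ∘ₗ
      e.repr.toLinearMap ∘ₗ U.subtype
  have hP : Function.Injective P := by
    refine (injective_iff_map_eq_zero P).2 fun u hu => ?_
    by_contra hu0
    refine (hU u u.2 (by exact_mod_cast hu0)).not_ge ?_
    rw [hT.inner_self_apply_eq_sum he]
    refine sum_nonneg fun i _ => ?_
    by_cases hi : i ∈ S
    · simp [show e.repr u i = 0 from congr_fun hu ⟨i, hi⟩]
    · have : 0 ≤ μ i := by simpa [S] using hi
      positivity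
  calc finrank ℝ U ≤ finrank ℝ (S → ℝ) := LinearMap.finrank_le_finrank_of_injective hP
    _ = #S := by rw [Module.finrank_fintype_fun_eq_card, Fintype.card_coe]

theorem exists_finrank_eq_card_neg (hT : T.IsSymmetric) (he : ∀ i, T (e i) = μ i • e i) :
    ∃ U : Submodule ℝ V, finrank ℝ U = #{i | μ i < 0} ∧ ∀ x ∈ U, x ≠ 0 → ⟪x, T x⟫_ℝ < 0 := by
  set S : Finset ι := {i | μ i < 0}
  refine ⟨Submodule.span ℝ (Set.range (e ∘ Subtype.val : S → V)), ?_, fun x hx hx0 => ?_⟩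
  · rw [finrank_span_eq_card (e.orthonormal.comp _ Subtype.val_injective).linearIndependent,
      Fintype.card_coe]
  have hcoord : ∀ i ∉ S, e.repr x i = 0 := by
    intro i hi
    rw [e.repr_apply_apply]
    refine (Submodule.span_le (p := LinearMap.ker (innerₛₗ ℝ (e i)))).2 ?_ hx
    rintro _ ⟨j, rfl⟩
    exact e.orthonormal.inner_eq_zero (by rintro rfl; exact hi j.2)
  obtain ⟨i, hi⟩ : ∃ i, e.repr x i ≠ 0 := by
    by_contra! h
    exact hx0 (e.repr.injective (by ext i; simp [h]))
  have hiS : i ∈ S := by_contra fun h => hi (hcoord i h)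
  rw [hT.inner_self_apply_eq_sum he]
  refine sum_neg' (fun j _ => ?_) ⟨i, mem_univ i, ?_⟩
  · by_cases hj : j ∈ S
    · have : μ j < 0 := by simpa [S] using hj
      nlinarith [sq_nonneg (e.repr x j)]
    · simp [hcoord j hj]
  · have : μ i < 0 := by simpa [S] using hiS
    have : 0 < e.repr x i ^ 2 := by positivity
    nlinarith

end Eigenbasis

variable [FiniteDimensional ℝ V] {n : ℕ}

theorem isGreatest_finrank_negDefinite (hT : T.IsSymmetric) (hn : finrank ℝ V = n) :
    IsGreatest {k | ∃ U : Submodule ℝ V, finrank ℝ U = k ∧ ∀ x ∈ U, x ≠ 0 → ⟪x, T x⟫_ℝ < 0}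
      #{i | hT.eigenvalues hn i < 0} := by
  have he i := hT.apply_eigenvectorBasis hn i
  simp only [RCLike.ofReal_real_eq_id, id_eq] at he
  refine ⟨hT.exists_finrank_eq_card_neg he, ?_⟩
  rintro _ ⟨U, rfl, hU⟩
  exact hT.finrank_le_card_neg he hU

theorem det_neg_of_odd_card_eigenvalues_neg (hT : T.IsSymmetric) (hn : finrank ℝ V = n)
    (hinj : Function.Injective T) (hodd : Odd #{i | hT.eigenvalues hn i < 0}) :
    LinearMap.det T < 0 := by
  have hdet := hT.det_eq_prod_eigenvalues hn
  simp only [RCLike.ofReal_real_eq_id, id_eq] at hdet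
  rw [hdet]
  refine prod_neg_of_odd_card_filter_neg _ _ (fun i _ hzero => ?_) hodd
  have hTe := hT.apply_eigenvectorBasis hn i
  simp only [RCLike.ofReal_real_eq_id, id_eq, hzero, zero_smul] at hTe
  exact (hT.eigenvectorBasis hn).orthonormal.ne_zero i (hinj (hTe.trans (map_zero T).symm))

end LinearMap.IsSymmetric

theorem Submodule.setOf_finrank_of_le_range_eq {R M N : Type*} [Ring R] [AddCommGroup M]
    [Module R M] [AddCommGroup N] [Module R N] (φ : M →ₗ[R] N) (hφ : Function.Injective φ)
    (Q : N → Prop) :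
    {k | ∃ U : Submodule R N, U ≤ LinearMap.range φ ∧ finrank R U = k ∧ ∀ x ∈ U, x ≠ 0 → Q x} =
      {k | ∃ U : Submodule R M, finrank R U = k ∧ ∀ x ∈ U, x ≠ 0 → Q (φ x)} := by
  ext k
  constructor
  · rintro ⟨U, hUφ, rfl, hU⟩
    refine ⟨U.comap φ, ?_, fun x hx hx0 => hU _ hx ((map_ne_zero_iff φ hφ).2 hx0)⟩
    rw [LinearEquiv.finrank_eq (equivMapOfInjective φ hφ _), map_comap_eq_self hUφ]
  · rintro ⟨U, rfl, hU⟩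
    refine ⟨U.map φ, LinearMap.map_le_range,
      (LinearEquiv.finrank_eq (equivMapOfInjective φ hφ U)).symm, ?_⟩
    rintro _ ⟨x, hx, rfl⟩ hx0
    exact hU x hx fun h => hx0 (by rw [h, map_zero])

namespace Matrix

variable {m : Type*} [Fintype m] [DecidableEq m]

-- Transported to Euclidean space, where the spectral theorem for symmetric operators applies.
abbrev euclideanComap (W : Submodule ℝ (m → ℝ)) : Submodule ℝ (EuclideanSpace ℝ m) :=
  W.comap (WithLp.linearEquiv 2 ℝ (m → ℝ)).toLinearMap

theorem toEuclideanLin_mem_euclideanComap {A : Matrix m m ℝ} {W : Submodule ℝ (m → ℝ)}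
    (hAW : W.map A.mulVecLin ≤ W) :
    ∀ x ∈ euclideanComap W, A.toEuclideanLin x ∈ euclideanComap W :=
  fun _ hx => hAW ⟨_, hx, rfl⟩

theorem morseIndexOn_eq_sSup {B : Matrix m m ℝ} {W : Submodule ℝ (m → ℝ)}
    (hBW : W.map B.mulVecLin ≤ W) :
    morseIndexOn B W = sSup {k | ∃ U : Submodule ℝ (euclideanComap W), finrank ℝ U = k ∧
      ∀ x ∈ U, x ≠ 0 →
        ⟪x, B.toEuclideanLin.restrict (toEuclideanLin_mem_euclideanComap hBW) x⟫_ℝ < 0} := by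
  set φ := (WithLp.linearEquiv 2 ℝ (m → ℝ)).toLinearMap ∘ₗ (euclideanComap W).subtype
  have hrange : LinearMap.range φ = W := by
    rw [LinearMap.range_comp, Submodule.range_subtype, Submodule.map_comap_eq_of_surjective]
    exact (WithLp.linearEquiv 2 ℝ (m → ℝ)).surjective
  have hφ : Function.Injective φ :=
    (WithLp.linearEquiv 2 ℝ (m → ℝ)).injective.comp Subtype.val_injective
  rw [morseIndexOn]
  conv_lhs => rw [← hrange]
  have hinner (x : euclideanComap W) :
      ⟪x, B.toEuclideanLin.restrict (toEuclideanLin_mem_euclideanComap hBW) x⟫_ℝ =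
        φ x ⬝ᵥ B *ᵥ φ x := by
    simp [EuclideanSpace.inner_eq_star_dotProduct, dotProduct_comm, φ]
  simp only [Submodule.setOf_finrank_of_le_range_eq φ hφ, hinner]

theorem exists_pos_eigenvalue_mul_of_odd_morseIndexOn {J B : Matrix m m ℝ} (hJ : J * J = -1)
    (hB : B.IsSymm) {W : Submodule ℝ (m → ℝ)} (hJW : W.map J.mulVecLin ≤ W)
    (hBW : W.map B.mulVecLin ≤ W) (hBinj : ∀ x ∈ W, B *ᵥ x = 0 → x = 0)
    (hodd : Odd (morseIndexOn B W)) :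
    ∃ l : ℝ, 0 < l ∧ ∃ x ≠ 0, (J * B) *ᵥ x = l • x := by
  set T := B.toEuclideanLin.restrict (toEuclideanLin_mem_euclideanComap hBW)
  set g := J.toEuclideanLin.restrict (toEuclideanLin_mem_euclideanComap hJW)
  have hT : T.IsSymmetric :=
    (isSymmetric_toEuclideanLin_iff.2 (isHermitian_iff_isSymm.2 hB)).restrict_invariant _
  have hTinj : Function.Injective T := by
    refine (injective_iff_map_eq_zero T).2 fun x hx => ?_
    simpa using hBinj _ x.2 (by simpa [T] using congr(WithLp.ofLp ($hx : EuclideanSpace ℝ m)))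
  have hg : g * g = -1 := by
    ext x : 1
    apply Subtype.ext
    apply WithLp.ofLp_injective
    simp [g, mulVec_mulVec, hJ, neg_mulVec]
  rw [morseIndexOn_eq_sSup hBW, (hT.isGreatest_finrank_negDefinite rfl).csSup_eq] at hodd
  have hdet : LinearMap.det (g * T) < 0 := by
    rw [map_mul]
    exact mul_neg_of_pos_of_neg (LinearMap.det_pos_of_mul_self_eq_neg_one hg)
      (hT.det_neg_of_odd_card_eigenvalues_neg rfl hTinj hodd)
  obtain ⟨l, hl, hlgT⟩ := LinearMap.exists_hasEigenvalue_pos_of_det_neg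
    (LinearMap.even_finrank_of_mul_self_eq_neg_one hg) hdet
  obtain ⟨x, hx⟩ := hlgT.exists_hasEigenvector
  refine ⟨l, hl, (x : EuclideanSpace ℝ m).ofLp, ?_, ?_⟩
  · simpa using hx.2
  · have := congr(WithLp.ofLp ($hx.apply_eq_smul : EuclideanSpace ℝ m))
    simpa [g, T, mulVec_mulVec] using this

end Matrix

theorem ofReal_mem_spectrum_mapC {m : Type*} [Fintype m] [DecidableEq m] {M : Matrix m m ℝ}
    {l : ℝ} {x : m → ℝ} (hx : x ≠ 0) (hMx : M *ᵥ x = l • x) :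
    (l : ℂ) ∈ spectrum ℂ (mapC M) := by
  have hl : Module.End.HasEigenvalue M.toLin' l :=
    Module.End.hasEigenvalue_of_hasEigenvector
      ⟨Module.End.mem_eigenspace_iff.2 (by rwa [toLin'_apply]), hx⟩
  rw [Module.End.hasEigenvalue_iff_isRoot_charpoly, charpoly_toLin'] at hl
  rw [mem_spectrum_iff_isRoot_charpoly, mapC, charpoly_map]
  exact hl.map

theorem Jmat_mul_self (n : ℕ) : Jmat n * Jmat n = -1 := by
  simp [Jmat, fromBlocks_multiply, ← fromBlocks_one, fromBlocks_neg]

theorem stmt_9_general (n : ℕ)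
    (B : Matrix (Fin n ⊕ Fin n) (Fin n ⊕ Fin n) ℝ) (hB : B.IsSymm)
    (W : Submodule ℝ ((Fin n ⊕ Fin n) → ℝ))
    (hJW : W.map (Jmat n).mulVecLin ≤ W)
    (hBW : W.map B.mulVecLin ≤ W)
    (hBinj : ∀ x ∈ W, B.mulVec x = 0 → x = 0)
    (hodd : Odd (morseIndexOn B W)) :
    ∃ z ∈ spectrum ℂ (mapC (Jmat n * B)), z.re ≠ 0 := by
  obtain ⟨l, hl, x, hx, hJBx⟩ :=
    exists_pos_eigenvalue_mul_of_odd_morseIndexOn (Jmat_mul_self n) hB hJW hBW hBinj hodd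
  exact ⟨l, ofReal_mem_spectrum_mapC hx hJBx, by simpa using hl.ne'⟩

/-- Let `W` be a `J`-invariant and `B`-invariant subspace on which `B` is injective
(hence an isomorphism of `W`). If the Morse index of `B` restricted to `W` is odd,
then `J·B` is spectrally unstable: it has a complex eigenvalue with nonzero real part. -/
theorem stmt_9 (n : ℕ) (hn : 0 < n)
    (B : Matrix (Fin n ⊕ Fin n) (Fin n ⊕ Fin n) ℝ) (hB : B.IsSymm)
    (W : Submodule ℝ ((Fin n ⊕ Fin n) → ℝ))
    (hJW : W.map (Jmat n).mulVecLin ≤ W)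
    (hBW : W.map B.mulVecLin ≤ W)
    (hBinj : ∀ x ∈ W, B.mulVec x = 0 → x = 0)
    (hodd : Odd (morseIndexOn B W)) :
    ∃ z ∈ spectrum ℂ (mapC (Jmat n * B)), z.re ≠ 0 :=
  stmt_9_general n B hB W hJW hBW hBinj hodd
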